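/- arXiv:2402.18745 — 2 statements merged into one kernel-verified Lean document; each statement's English description precedes it below -/
import Mathlib

section
/- Suppose the K×J matrix W·Θᵀ admits a thin singular value decomposition W·Θᵀ = U† · Σ† · (V†)ᵀ, where U† is a K×K real matrix with (U†)ᵀ·U† = I_K, Σ† is a K×K real matrix, and V† is a J×K real matrix with (V†)ᵀ·V† = I_K. Define the N×K matrix U := Ω · Z · W⁻¹ · U†. Then: (i) Uᵀ·U = I_K; (ii) Ω·Z·Θᵀ = U · Σ† · (V†)ᵀ, so that U, Σ†, V† constitute a singular value decomposition of the signal matrix Ω·Z·Θᵀ; and (iii) for every i ∈ Fin N, the i-th row of U equals (ω i / sqrt(Σ_{j ∈ C_{s i}} (ω j)²)) times the (s i)-th row of U†. -/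
open Matrix Finset

noncomputable section

/-- The k-th cluster: indices assigned to latent class k. -/
def clusterSet {N K : ℕ} (s : Fin N → Fin K) (k : Fin K) : Finset (Fin N) :=
  Finset.univ.filter (fun i => s i = k)

/-- The N×K cluster-indicator matrix Z. -/
def clusterInd {N K : ℕ} (s : Fin N → Fin K) : Matrix (Fin N) (Fin K) ℝ :=
  fun i k => if s i = k then 1 else 0

/-- The N×N diagonal matrix Ω of degree parameters. -/
def degMat {N : ℕ} (ω : Fin N → ℝ) : Matrix (Fin N) (Fin N) ℝ :=
  Matrix.diagonal ω

/-- The K×K diagonal matrix W with k-th entry sqrt(∑_{i ∈ C_k} ω i ^ 2). -/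
def Wmat {N K : ℕ} (s : Fin N → Fin K) (ω : Fin N → ℝ) : Matrix (Fin K) (Fin K) ℝ :=
  Matrix.diagonal (fun k => Real.sqrt (∑ i ∈ clusterSet s k, ω i ^ 2))

theorem stmt0 (N J K : ℕ) (hN : 0 < N) (hJ : 0 < J) (hK : 0 < K)
    (s : Fin N → Fin K) (hs : ∀ k, (clusterSet s k).Nonempty)
    (ω : Fin N → ℝ) (hω : ∀ i, 0 < ω i)
    (Θ : Matrix (Fin J) (Fin K) ℝ)
    (Ud Sd : Matrix (Fin K) (Fin K) ℝ) (Vd : Matrix (Fin J) (Fin K) ℝ)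
    (hSVD : Wmat s ω * Θᵀ = Ud * Sd * Vdᵀ)
    (hUd : Udᵀ * Ud = 1) (hVd : Vdᵀ * Vd = 1) :
    (degMat ω * clusterInd s * (Wmat s ω)⁻¹ * Ud)ᵀ *
        (degMat ω * clusterInd s * (Wmat s ω)⁻¹ * Ud) = 1 ∧
    degMat ω * clusterInd s * Θᵀ =
        (degMat ω * clusterInd s * (Wmat s ω)⁻¹ * Ud) * Sd * Vdᵀ ∧
    ∀ i : Fin N,
      (degMat ω * clusterInd s * (Wmat s ω)⁻¹ * Ud) i =
        fun k => (ω i / Real.sqrt (∑ j ∈ clusterSet s (s i), ω j ^ 2)) * Ud (s i) k := by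
  set D : Fin K → ℝ := fun k => ∑ i ∈ clusterSet s k, ω i ^ 2 with hDdef
  have hDpos : ∀ k, 0 < D k := fun k =>
    Finset.sum_pos (fun i _ => pow_pos (hω i) 2) (hs k)
  have hsqrt : ∀ k, 0 < Real.sqrt (D k) := fun k => Real.sqrt_pos.mpr (hDpos k)
  have hA : ∀ (i : Fin N) (l : Fin K),
      (degMat ω * clusterInd s) i l = if s i = l then ω i else 0 := by
    intro i l
    simp [degMat, clusterInd, Matrix.diagonal_mul, mul_ite]
  have hAtA : (degMat ω * clusterInd s)ᵀ * (degMat ω * clusterInd s)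
      = Matrix.diagonal D := by
    ext k l
    simp only [Matrix.mul_apply, Matrix.transpose_apply, hA, Matrix.diagonal_apply]
    by_cases h : k = l
    · subst h
      simp only [if_pos rfl, hDdef, clusterSet, Finset.sum_filter]
      apply Finset.sum_congr rfl
      intro i _
      by_cases hi : s i = k <;> simp [hi, pow_two]
    · rw [if_neg h]
      apply Finset.sum_eq_zero
      intro i _
      by_cases h1 : s i = k
      · have h2 : ¬ (s i = l) := fun h2 => h (h1.symm.trans h2)
        simp [h2]
      · simp [h1]
  have hWinv : (Wmat s ω)⁻¹
      = Matrix.diagonal (fun k => (Real.sqrt (D k))⁻¹) := by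
    apply Matrix.inv_eq_right_inv
    rw [Wmat, Matrix.diagonal_mul_diagonal]
    have : (fun k => Real.sqrt (D k) * (Real.sqrt (D k))⁻¹) = fun _ : Fin K => (1:ℝ) :=
      funext fun k => mul_inv_cancel₀ (ne_of_gt (hsqrt k))
    show Matrix.diagonal (fun k => Real.sqrt (D k) * (Real.sqrt (D k))⁻¹) = 1
    rw [this, Matrix.diagonal_one]
  have hWinvW : (Wmat s ω)⁻¹ * Wmat s ω = 1 := by
    rw [hWinv, Wmat, Matrix.diagonal_mul_diagonal]
    have : (fun k => (Real.sqrt (D k))⁻¹ * Real.sqrt (D k)) = fun _ : Fin K => (1:ℝ) :=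
      funext fun k => inv_mul_cancel₀ (ne_of_gt (hsqrt k))
    show Matrix.diagonal (fun k => (Real.sqrt (D k))⁻¹ * Real.sqrt (D k)) = 1
    rw [this, Matrix.diagonal_one]
  refine ⟨?_, ?_, ?_⟩
  · -- part (i)
    have : (degMat ω * clusterInd s * (Wmat s ω)⁻¹ * Ud)ᵀ *
        (degMat ω * clusterInd s * (Wmat s ω)⁻¹ * Ud)
        = Udᵀ * ((Wmat s ω)⁻¹ᵀ *
            ((degMat ω * clusterInd s)ᵀ * (degMat ω * clusterInd s)) *
            (Wmat s ω)⁻¹) * Ud := by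
      simp only [Matrix.transpose_mul, Matrix.mul_assoc]
    rw [this, hAtA, hWinv]
    rw [Matrix.diagonal_transpose, Matrix.diagonal_mul_diagonal,
      Matrix.diagonal_mul_diagonal]
    have hone : (fun k => (Real.sqrt (D k))⁻¹ * D k * (Real.sqrt (D k))⁻¹)
        = fun _ : Fin K => (1:ℝ) := by
      funext k
      have h1 : D k = Real.sqrt (D k) * Real.sqrt (D k) :=
        (Real.mul_self_sqrt (le_of_lt (hDpos k))).symm
      rw [h1]
      field_simp
      rw [Real.sqrt_sq (Real.sqrt_nonneg _)]
      exact div_self (pow_ne_zero 2 (ne_of_gt (hsqrt k)))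
    rw [hone, Matrix.diagonal_one, Matrix.mul_one, hUd]
  · -- part (ii)
    calc degMat ω * clusterInd s * Θᵀ
        = degMat ω * clusterInd s * ((Wmat s ω)⁻¹ * Wmat s ω) * Θᵀ := by
          rw [hWinvW, Matrix.mul_one]
      _ = degMat ω * clusterInd s * (Wmat s ω)⁻¹ * (Wmat s ω * Θᵀ) := by
          simp only [Matrix.mul_assoc]
      _ = degMat ω * clusterInd s * (Wmat s ω)⁻¹ * Ud * Sd * Vdᵀ := by
          rw [hSVD]; simp only [Matrix.mul_assoc]
  · -- part (iii)
    intro i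
    funext k
    have hX : ∀ l, (degMat ω * clusterInd s * (Wmat s ω)⁻¹) i l
        = if s i = l then ω i * (Real.sqrt (D l))⁻¹ else 0 := by
      intro l
      rw [hWinv, Matrix.mul_diagonal, hA]
      by_cases h : s i = l <;> simp [h]
    have : (degMat ω * clusterInd s * (Wmat s ω)⁻¹ * Ud) i k
        = ∑ l, (if s i = l then ω i * (Real.sqrt (D l))⁻¹ else 0) * Ud l k := by
      rw [Matrix.mul_apply]
      exact Finset.sum_congr rfl fun l _ => by rw [hX]
    rw [this]
    rw [Finset.sum_eq_single (s i)]
    · simp [div_eq_mul_inv]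
      exact Or.inl (Or.inl rfl)
    · intro l _ hl
      rw [if_neg (fun h => hl h.symm), zero_mul]
    · intro h
      exact absurd (Finset.mem_univ (s i)) h
end
end

section
/- Let U† be a K×K real orthogonal matrix ((U†)ᵀ·U† = I_K) and set U := Ω · Z · W⁻¹ · U†. Then for every i ∈ Fin N, the Euclidean norm of the i-th row of U equals ω i / sqrt(Σ_{j ∈ C_{s i}} (ω j)²); in particular every row of U is nonzero. Moreover, the row-normalized matrix Ū, whose i-th row is U_{i,:} / ‖U_{i,:}‖, satisfies Ū_{i,:} = (U†)_{s i,:} for every i — so Ū takes at most K distinct row values and its rows are constant within each cluster — and for all i, j ∈ Fin N with s i ≠ s j, one has ‖Ū_{i,:} − Ū_{j,:}‖ = √2. -/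
/-!
Each row of `Z` picks out a single cluster, so the `i`-th row of `Ω Z W⁻¹ U†` is the row
`(U†)_{s i,:}` scaled by the positive number `ω i / W_{s i}`. The rows of an orthogonal matrix are
orthonormal, hence this row has norm `ω i / W_{s i}`, normalizing it recovers `(U†)_{s i,:}`, and
two distinct rows of `U†` are at distance `√(1 + 1)`.
-/

open Matrix Finset

noncomputable section

/-- Euclidean ℓ² norm of a vector indexed by `Fin n`. -/
def euclNorm {n : ℕ} (v : Fin n → ℝ) : ℝ :=
  ‖(EuclideanSpace.equiv (Fin n) ℝ).symm v‖

theorem Matrix.inv_diagonal_of_ne_zero {n 𝕜 : Type*} [Fintype n] [DecidableEq n] [Field 𝕜]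
    {v : n → 𝕜} (hv : ∀ i, v i ≠ 0) : (diagonal v)⁻¹ = diagonal v⁻¹ := by
  refine inv_eq_right_inv ?_
  rw [diagonal_mul_diagonal, ← diagonal_one]
  exact congrArg diagonal (funext fun i => mul_inv_cancel₀ (hv i))

theorem Matrix.dotProduct_row_row_of_transpose_mul_self_eq_one {n R : Type*} [Fintype n]
    [DecidableEq n] [CommRing R] {A : Matrix n n R} (hA : Aᵀ * A = 1) (a b : n) :
    A a ⬝ᵥ A b = if a = b then 1 else 0 := by
  have h := congrArg (fun M : Matrix n n R => M a b) (mul_eq_one_comm.mp hA)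
  simp only [mul_apply', one_apply] at h
  exact h

theorem euclNorm_eq_sqrt_dotProduct {n : ℕ} (v : Fin n → ℝ) : euclNorm v = √(v ⬝ᵥ v) := by
  rw [euclNorm, EuclideanSpace.norm_eq, dotProduct]
  simp [sq]

theorem euclNorm_smul {n : ℕ} (c : ℝ) (v : Fin n → ℝ) : euclNorm (c • v) = |c| * euclNorm v := by
  rw [euclNorm, euclNorm, map_smul, norm_smul, Real.norm_eq_abs]

section Orthogonal

variable {K : ℕ} {Ud : Matrix (Fin K) (Fin K) ℝ}

theorem euclNorm_row_of_transpose_mul_self_eq_one (hUd : Udᵀ * Ud = 1) (a : Fin K) :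
    euclNorm (Ud a) = 1 := by
  rw [euclNorm_eq_sqrt_dotProduct, dotProduct_row_row_of_transpose_mul_self_eq_one hUd,
    if_pos rfl, Real.sqrt_one]

theorem euclNorm_row_sub_row_of_transpose_mul_self_eq_one (hUd : Udᵀ * Ud = 1) {a b : Fin K}
    (hab : a ≠ b) : euclNorm (Ud a - Ud b) = √2 := by
  rw [euclNorm_eq_sqrt_dotProduct, sub_dotProduct, dotProduct_sub, dotProduct_sub,
    dotProduct_comm (Ud b) (Ud a)]
  simp only [dotProduct_row_row_of_transpose_mul_self_eq_one hUd, ↓reduceIte, if_neg hab]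
  norm_num

end Orthogonal

section ClusterMatrices

variable {N K : ℕ} (s : Fin N → Fin K) (ω : Fin N → ℝ)

theorem clusterInd_mul_row {m : Type*} (B : Matrix (Fin K) m ℝ) (i : Fin N) :
    (clusterInd s * B) i = B (s i) := by
  ext j
  simp [clusterInd, mul_apply]

theorem degMat_mul_clusterInd_mul_diagonal_mul_row {m : Type*} (d : Fin K → ℝ)
    (M : Matrix (Fin K) m ℝ) (i : Fin N) :
    (degMat ω * clusterInd s * diagonal d * M) i = (ω i * d (s i)) • M (s i) := by
  ext j
  simp only [Matrix.mul_assoc]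
  rw [degMat, diagonal_mul, clusterInd_mul_row, diagonal_mul, Pi.smul_apply, smul_eq_mul,
    mul_assoc]

variable {s ω}

theorem sqrt_sum_sq_clusterSet_pos (hs : ∀ k, (clusterSet s k).Nonempty) (hω : ∀ i, 0 < ω i)
    (k : Fin K) :
    0 < √(∑ i ∈ clusterSet s k, ω i ^ 2) :=
  Real.sqrt_pos.mpr (sum_pos (fun i _ => pow_pos (hω i) 2) (hs k))

theorem Wmat_inv (hs : ∀ k, (clusterSet s k).Nonempty) (hω : ∀ i, 0 < ω i) :
    (Wmat s ω)⁻¹ = diagonal fun k => (√(∑ i ∈ clusterSet s k, ω i ^ 2))⁻¹ :=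
  inv_diagonal_of_ne_zero fun k => (sqrt_sum_sq_clusterSet_pos hs hω k).ne'

end ClusterMatrices

theorem stmt1_general (N K : ℕ)
    (s : Fin N → Fin K) (hs : ∀ k, (clusterSet s k).Nonempty)
    (ω : Fin N → ℝ) (hω : ∀ i, 0 < ω i)
    (Ud : Matrix (Fin K) (Fin K) ℝ) (hUd : Udᵀ * Ud = 1)
    (U : Matrix (Fin N) (Fin K) ℝ)
    (hU : U = degMat ω * clusterInd s * (Wmat s ω)⁻¹ * Ud)
    (Ubar : Matrix (Fin N) (Fin K) ℝ)
    (hUbar : ∀ i, Ubar i = (euclNorm (U i))⁻¹ • U i) :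
    (∀ i, euclNorm (U i) = ω i / Real.sqrt (∑ j ∈ clusterSet s (s i), ω j ^ 2)) ∧
    (∀ i, U i ≠ 0) ∧
    (∀ i, Ubar i = Ud (s i)) ∧
    (∀ i j, s i ≠ s j → euclNorm (Ubar i - Ubar j) = Real.sqrt 2) := by
  set c : Fin N → ℝ := fun i => ω i / √(∑ j ∈ clusterSet s (s i), ω j ^ 2)
  have hc : ∀ i, 0 < c i := fun i => div_pos (hω i) (sqrt_sum_sq_clusterSet_pos hs hω (s i))
  have hrow : ∀ i, U i = c i • Ud (s i) := fun i => by
    rw [hU, Wmat_inv hs hω, degMat_mul_clusterInd_mul_diagonal_mul_row, ← div_eq_mul_inv]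
  have hnorm : ∀ i, euclNorm (U i) = c i := fun i => by
    rw [hrow, euclNorm_smul, euclNorm_row_of_transpose_mul_self_eq_one hUd, mul_one,
      abs_of_pos (hc i)]
  have hUbar_row : ∀ i, Ubar i = Ud (s i) := fun i => by
    rw [hUbar, hnorm, hrow, smul_smul, inv_mul_cancel₀ (hc i).ne', one_smul]
  refine ⟨hnorm, fun i hi => (hc i).ne' ?_, hUbar_row, fun i j hij => ?_⟩
  · rw [← hnorm i, hi, euclNorm_eq_sqrt_dotProduct, zero_dotProduct, Real.sqrt_zero]
  · rw [hUbar_row, hUbar_row]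
    exact euclNorm_row_sub_row_of_transpose_mul_self_eq_one hUd hij

theorem stmt1 (N K : ℕ) (hN : 0 < N) (hK : 0 < K)
    (s : Fin N → Fin K) (hs : ∀ k, (clusterSet s k).Nonempty)
    (ω : Fin N → ℝ) (hω : ∀ i, 0 < ω i)
    (Ud : Matrix (Fin K) (Fin K) ℝ) (hUd : Udᵀ * Ud = 1)
    (U : Matrix (Fin N) (Fin K) ℝ)
    (hU : U = degMat ω * clusterInd s * (Wmat s ω)⁻¹ * Ud)
    (Ubar : Matrix (Fin N) (Fin K) ℝ)
    (hUbar : ∀ i, Ubar i = (euclNorm (U i))⁻¹ • U i) :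
    (∀ i, euclNorm (U i) = ω i / Real.sqrt (∑ j ∈ clusterSet s (s i), ω j ^ 2)) ∧
    (∀ i, U i ≠ 0) ∧
    (∀ i, Ubar i = Ud (s i)) ∧
    (∀ i j, s i ≠ s j → euclNorm (Ubar i - Ubar j) = Real.sqrt 2) :=
  stmt1_general N K s hs ω hω Ud hUd U hU Ubar hUbar
end
end
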